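/- arXiv:0811.3998 — 4 statements merged into one kernel-verified Lean document; each statement's English description precedes it below -/
import Mathlib

section
/- Let 𝒜 ⊆ [0,1] be a DCC set containing 1, and let a > 0. Then there exists δ > 0 (depending only on 𝒜 and a) such that for any finite collection of positive reals b₁,…,bₖ ∈ 𝒜 and reals x₁,…,xₖ with 1 − δ < xⱼ ≤ 1 for all j and xⱼ < 1 for at least one j, one has Σⱼ xⱼ bⱼ ≠ a. -/
/-- A set of reals satisfies the descending chain condition if it contains
no infinite strictly decreasing sequence. -/
def DCC (A : Set ℝ) : Prop :=
  ¬ ∃ f : ℕ → ℝ, (∀ n, f n ∈ A) ∧ StrictAnti f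

/-- (Alexeev–Mori) For a DCC set `A ⊆ [0,1]` with `1 ∈ A` and `a > 0`, there
is `δ > 0` such that no sum `∑ xⱼ bⱼ` with `bⱼ ∈ A` positive,
`xⱼ ∈ (1-δ, 1]` and some `xⱼ < 1`, equals `a`. -/
theorem alexeev_mori_dcc_lemma
    (A : Set ℝ) (hA : A ⊆ Set.Icc 0 1) (hDCC : DCC A) (h1 : (1 : ℝ) ∈ A)
    (a : ℝ) (ha : 0 < a) :
    ∃ δ : ℝ, 0 < δ ∧
      ∀ (k : ℕ) (b x : Fin k → ℝ),
        (∀ j, b j ∈ A) → (∀ j, 0 < b j) →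
        (∀ j, 1 - δ < x j ∧ x j ≤ 1) → (∃ j, x j < 1) →
        (∑ j, x j * b j) ≠ a := by
  classical
  have hAwf : A.IsWF := by
    rw [Set.isWF_iff_no_descending_seq]
    intro f hf hmem
    exact hDCC ⟨f, hmem, hf⟩
  set B : Set ℝ := A ∩ Set.Ioi 0 with hBdef
  have hBwf : B.IsWF := hAwf.mono Set.inter_subset_left
  have hBne : B.Nonempty := ⟨1, h1, Set.mem_Ioi.mpr zero_lt_one⟩
  obtain ⟨m, hmB, hmmin⟩ : ∃ m ∈ B, ∀ y ∈ B, m ≤ y :=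
    ⟨hBwf.min hBne, hBwf.min_mem hBne, fun y hy => hBwf.min_le hBne hy⟩
  have hm0 : 0 < m := hmB.2
  set K : ℕ := ⌈(a + 1) / m⌉₊ with hKdef
  set B' : Set ℝ := insert 0 B with hB'def
  have hB'pwo : B'.IsPWO := hBwf.isPWO.insert 0
  set Sk : ℕ → Set ℝ :=
    fun k => {t | ∃ b : Fin k → ℝ, (∀ j, b j ∈ B') ∧ t = ∑ j, b j} with hSkdef
  have hSkpwo : ∀ k, (Sk k).IsPWO := by
    intro k
    induction k with
    | zero =>
      apply (Set.finite_singleton (0 : ℝ)).isPWO.mono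
      rintro t ⟨b, -, rfl⟩
      simp
    | succ n ih =>
      apply (hB'pwo.add ih).mono
      rintro t ⟨b, hbmem, rfl⟩
      rw [Fin.sum_univ_succ]
      exact Set.add_mem_add (hbmem 0) ⟨fun j => b j.succ, fun j => hbmem _, rfl⟩
  set W : Set ℝ := Sk K ∩ Set.Ioi a with hWdef
  have hWwf : W.IsWF := (hSkpwo K).isWF.mono Set.inter_subset_left
  set s : ℝ := if hne : W.Nonempty then min (hWwf.min hne) (a + 1) else a + 1
    with hsdef
  have hsa : a < s := by
    rw [hsdef]
    split_ifs with hne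
    · exact lt_min (hWwf.min_mem hne).2 (by linarith)
    · linarith
  have hsle : s ≤ a + 1 := by
    rw [hsdef]; split_ifs with hne
    · exact min_le_right _ _
    · exact le_refl _
  have hkey : ∀ t ∈ W, s ≤ t := by
    intro t ht
    rw [hsdef, dif_pos ⟨t, ht⟩]
    exact le_trans (min_le_left _ _) (hWwf.min_le _ ht)
  have hs0 : 0 < s := lt_trans ha hsa
  refine ⟨(s - a) / (2 * s), div_pos (by linarith) (by linarith), ?_⟩
  set δ : ℝ := (s - a) / (2 * s) with hδdef
  have hδeq : 2 * s * δ = s - a := by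
    rw [hδdef]; field_simp
  intro k b x hbA hbpos hx hlt heq
  obtain ⟨j₀, hj₀⟩ := hlt
  set S : ℝ := ∑ j, b j with hSdef
  -- a < S
  have hS1 : a < S := by
    rw [← heq, hSdef]
    refine Finset.sum_lt_sum (fun i _ => ?_) ⟨j₀, Finset.mem_univ _, ?_⟩
    · nlinarith [hbpos i, (hx i).2]
    · nlinarith [hbpos j₀, (hx j₀).2]
  -- (1-δ) * S < a
  have hS2 : (1 - δ) * S < a := by
    have hne : (Finset.univ : Finset (Fin k)).Nonempty := ⟨j₀, Finset.mem_univ _⟩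
    have := Finset.sum_lt_sum_of_nonempty hne
      (f := fun i => (1 - δ) * b i) (g := fun i => x i * b i)
      (fun i _ => mul_lt_mul_of_pos_right (hx i).1 (hbpos i))
    rw [heq] at this
    calc (1 - δ) * S = ∑ i, (1 - δ) * b i := by rw [hSdef, Finset.mul_sum]
    _ < a := this
  -- S < s
  have hSs : S < s := by
    nlinarith [mul_pos hs0 (show (0:ℝ) < s - a by linarith)]
  -- k ≤ K
  have hkm : (k : ℝ) * m ≤ S := by
    have := Finset.card_nsmul_le_sum (Finset.univ : Finset (Fin k)) b m
      (fun i _ => hmmin (b i) ⟨hbA i, hbpos i⟩)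
    simpa [nsmul_eq_mul] using this
  have hkK : k ≤ K := by
    have h1' : (k : ℝ) ≤ (a + 1) / m := by
      rw [le_div_iff₀ hm0]
      linarith
    have h2' : (a + 1) / m ≤ (K : ℝ) := by
      rw [hKdef]; exact Nat.le_ceil _
    exact_mod_cast le_trans h1' h2'
  -- S ∈ Sk K via padding with zeros
  have hSW : S ∈ W := by
    refine ⟨?_, hS1⟩
    set g : ℕ → ℝ := fun i => if h : i < k then b ⟨i, h⟩ else 0 with hgdef
    refine ⟨fun j => g j, fun j => ?_, ?_⟩
    · rw [hgdef]
      dsimp only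
      split_ifs with h
      · exact Set.mem_insert_of_mem _ ⟨hbA _, hbpos _⟩
      · exact Set.mem_insert _ _
    · rw [hSdef, Fin.sum_univ_eq_sum_range g K,
        ← Finset.sum_subset (Finset.range_subset_range.2 hkK)
          (fun i _ hi => by
            rw [hgdef]; exact dif_neg (by simpa using hi)),
        ← Fin.sum_univ_eq_sum_range g k]
      refine Finset.sum_congr rfl (fun j _ => ?_)
      rw [hgdef]
      simp [j.isLt]
  exact absurd (hkey S hSW) (not_le.2 hSs)
end

section
/- Let 𝒜 ⊆ [0,1] satisfy the DCC and let a > 0 with a ∉ {finite sums of elements of 𝒜}. Then there is δ > 0 such that no sum Σⱼ xⱼ bⱼ with bⱼ ∈ 𝒜 positive and xⱼ ∈ (1−δ, 1] equals a. More precisely: the set of all finite sums of elements of a DCC subset of [0,1] that lie in a bounded interval is itself a DCC set. -/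
lemma dcc_iff_isWF (A : Set ℝ) : DCC A ↔ A.IsWF := by
  rw [Set.isWF_iff_no_descending_seq, DCC]
  constructor
  · intro h f hf hmem
    exact h ⟨f, fun n => hmem n, hf⟩
  · rintro h ⟨f, hmem, hf⟩
    exact h f hf fun n => hmem n

/-- If `A ⊆ [0,1]` satisfies the DCC, then for any `C > 0` the set of all
finite sums of elements of `A` which are at most `C` also satisfies the DCC. -/
theorem finite_sums_of_dcc_set_dcc
    (A : Set ℝ) (hA : A ⊆ Set.Icc 0 1) (hDCC : DCC A) (C : ℝ) (hC : 0 < C) :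
    DCC {s : ℝ | (∃ m : Multiset ℝ, (∀ a ∈ m, a ∈ A) ∧ m.sum = s) ∧ s ≤ C} := by
  rw [dcc_iff_isWF] at hDCC ⊢
  have hpwo : A.IsPWO := hDCC.isPWO
  have hcl : Set.IsPWO (AddSubmonoid.closure A : Set ℝ) :=
    hpwo.addSubmonoid_closure (fun x hx => (hA hx).1)
  refine (hcl.isWF.mono ?_)
  rintro s ⟨⟨m, hm, rfl⟩, -⟩
  exact AddSubmonoid.multiset_sum_mem _ m fun a ha => AddSubmonoid.subset_closure (hm a ha)
end

section
/- Let 𝒜 ⊆ [0,1] be a DCC set. Then the set ℬ = { (b + n − 1)/n : b ∈ 𝒜 ∪ {0}, n a positive integer } is a DCC subset of [0,1]. -/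
/-- If `A ⊆ [0,1]` is DCC, then `{ (b + n - 1)/n : b ∈ A ∪ {0}, n ∈ ℤ₊ }`
is a DCC subset of `[0,1]`. -/
theorem boundary_coefficients_dcc
    (A : Set ℝ) (hA : A ⊆ Set.Icc 0 1) (hDCC : DCC A) :
    {x : ℝ | ∃ b ∈ A ∪ {0}, ∃ n : ℕ, 0 < n ∧ x = (b + n - 1) / n}
        ⊆ Set.Icc 0 1 ∧
      DCC {x : ℝ | ∃ b ∈ A ∪ {0}, ∃ n : ℕ, 0 < n ∧ x = (b + n - 1) / n} := by
  have hA0 : ∀ b, b ∈ A ∪ {0} → b ∈ Set.Icc (0:ℝ) 1 := by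
    rintro b (hb | rfl)
    · exact hA hb
    · exact ⟨le_rfl, zero_le_one⟩
  constructor
  · rintro x ⟨b, hb, n, hn, rfl⟩
    obtain ⟨hb0, hb1⟩ := hA0 b hb
    have hn' : (0:ℝ) < n := by exact_mod_cast hn
    have hn1 : (1:ℝ) ≤ n := by exact_mod_cast hn
    constructor
    · apply div_nonneg _ hn'.le; linarith
    · rw [div_le_one hn']; linarith
  · rintro ⟨f, hf, hanti⟩
    choose b hb n hn hfeq using hf
    have hnpos : ∀ k, (0:ℝ) < n k := fun k => by exact_mod_cast hn k
    have hub : ∀ k, f k ≤ 1 := by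
      intro k
      obtain ⟨hb0, hb1⟩ := hA0 _ (hb k)
      have hn' := hnpos k
      rw [hfeq k, div_le_one hn']; linarith
    have hε : (0:ℝ) < 1 - f 1 := by
      have h1 := hanti (show (0:ℕ) < 1 by norm_num)
      have h2 := hub 0
      linarith
    have hlow : ∀ k, 1 - 1/(n k : ℝ) ≤ f k := by
      intro k
      obtain ⟨hb0, hb1⟩ := hA0 _ (hb k)
      have hn' := hnpos k
      rw [hfeq k, le_div_iff₀ hn']
      have h : (1 - 1/(n k:ℝ)) * n k = n k - 1 := by field_simp
      rw [h]; linarith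
    set N := ⌈(1 - f 1)⁻¹⌉₊ with hN
    have hbound : ∀ k, n (k+1) < N + 1 := by
      intro k
      have hn' := hnpos (k+1)
      have h1 : 1 - 1/(n (k+1):ℝ) ≤ f 1 :=
        le_trans (hlow (k+1)) (hanti.antitone (by omega))
      have h2 : 1 - f 1 ≤ 1/(n (k+1):ℝ) := by linarith
      have h3 : (n (k+1):ℝ) ≤ (1 - f 1)⁻¹ := by
        rw [inv_eq_one_div, le_div_iff₀ hε]
        have := (le_div_iff₀ hn').mp h2
        nlinarith
      have h4 : (n (k+1):ℝ) ≤ N := h3.trans (Nat.le_ceil _)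
      have h5 : n (k+1) ≤ N := by exact_mod_cast h4
      omega
    obtain ⟨y, hy⟩ :=
      Finite.exists_infinite_fiber (fun k => (⟨n (k+1), hbound k⟩ : Fin (N+1)))
    have hp : {k | n (k+1) = (y : ℕ)}.Infinite := by
      have := Set.infinite_coe_iff.mp hy
      apply Set.Infinite.mono _ this
      intro k hk
      simp only [Set.mem_preimage, Set.mem_singleton_iff] at hk
      simpa using congrArg Fin.val hk
    set g : ℕ → ℕ := Nat.nth (fun k => n (k+1) = (y : ℕ)) with hg
    have hgmem : ∀ j, n (g j + 1) = (y : ℕ) := fun j => Nat.nth_mem_of_infinite hp j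
    have hgmono : StrictMono g := Nat.nth_strictMono hp
    have hypos : 0 < (y : ℕ) := by rw [← hgmem 0]; exact hn _
    have hyR : (0:ℝ) < ((y : ℕ) : ℝ) := by exact_mod_cast hypos
    -- explicit formula for b on the subsequence
    have hbval : ∀ j, b (g j + 1) = f (g j + 1) * (y : ℕ) - (y : ℕ) + 1 := by
      intro j
      have hn' := hnpos (g j + 1)
      have := hfeq (g j + 1)
      rw [hgmem j] at this
      field_simp at this
      linarith
    set c : ℕ → ℝ := fun j => b (g j + 1) with hc
    have hcanti : StrictAnti c := by
      intro j j' hjj'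
      have hff : f (g j' + 1) < f (g j + 1) := hanti (by have := hgmono hjj'; omega)
      simp only [hc]
      rw [hbval j, hbval j']
      nlinarith
    have hcmem : ∀ j, c j ∈ A := by
      intro j
      rcases hb (g j + 1) with h | h
      · exact h
      · exfalso
        have h0 : c j = 0 := h
        have h1 : c (j+1) < 0 := by
          have := hcanti (show j < j + 1 by omega); linarith
        have h2 : (0:ℝ) ≤ c (j+1) := (hA0 _ (hb (g (j+1) + 1))).1
        linarith
    exact hDCC ⟨c, hcmem, hcanti⟩
end

section
/- Let 0 < ε < 1 and suppose real numbers b₁,…,bₖ ∈ [0, 1 − ε] and positive integers n₁,…,nₖ, n satisfy Σᵢ nᵢ bᵢ + n(1 − a) = 2 with 0 < a < ε ≤ mf₂, where mf₂ > 0 is chosen so that no sum Σ xⱼ bⱼ with bⱼ ∈ 𝒜 ∪ {1}, xⱼ ∈ (1 − mf₂, 1], some xⱼ < 1, equals 2. Then a contradiction follows; i.e., such a, bᵢ, nᵢ, n cannot exist. -/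
theorem Fintype.sum_sigma_fin_eq_sum_nsmul {ι M : Type*} [Fintype ι] [AddCommMonoid M]
    (m : ι → ℕ) (f : ι → M) :
    ∑ p : Σ i, Fin (m i), f p.1 = ∑ i, m i • f i := by
  simp [Fintype.sum_sigma]

theorem sum_mul_ne_of_forall_fin {p q : ℝ → Prop} {c : ℝ}
    (h : ∀ (l : ℕ) (bb x : Fin l → ℝ), (∀ j, p (bb j)) → (∀ j, q (x j)) →
      (∃ j, x j < 1) → ∑ j, x j * bb j ≠ c)
    {ι : Type*} [Fintype ι] (bb x : ι → ℝ) (hbb : ∀ j, p (bb j)) (hx : ∀ j, q (x j))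
    (hx1 : ∃ j, x j < 1) :
    ∑ j, x j * bb j ≠ c := by
  let e := Fintype.equivFin ι
  obtain ⟨j, hj⟩ := hx1
  rw [← e.symm.sum_comp]
  exact h _ (bb ∘ e.symm) (x ∘ e.symm) (fun _ => hbb _) (fun _ => hx _) ⟨e j, by simpa⟩

theorem no_solution_fiber_equation_general
    (ε mf₂ : ℝ) (hεmf : ε ≤ mf₂)
    (A : Set ℝ)
    (hAM : ∀ (l : ℕ) (bb x : Fin l → ℝ),
      (∀ j, bb j ∈ A ∪ {1}) → (∀ j, 1 - mf₂ < x j ∧ x j ≤ 1) →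
      (∃ j, x j < 1) → (∑ j, x j * bb j) ≠ 2)
    (k : ℕ) (b : Fin k → ℝ) (hb : ∀ i, b i ∈ A)
    (m : Fin k → ℕ) (n : ℕ) (hn : 0 < n)
    (a : ℝ) (ha0 : 0 < a) (haε : a < ε)
    (heq : (∑ i, (m i : ℝ) * b i) + (n : ℝ) * (1 - a) = 2) :
    False := by
  let bb : (Σ i, Fin (m i)) ⊕ Fin n → ℝ := Sum.elim (fun p => b p.1) 1
  let x : (Σ i, Fin (m i)) ⊕ Fin n → ℝ := Sum.elim 1 (fun _ => 1 - a)
  have hsum : ∑ t, x t * bb t = 2 := by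
    rw [← heq, Fintype.sum_sum_type]
    congr 1
    · simp [bb, x, Fintype.sum_sigma_fin_eq_sum_nsmul]
    · simp [bb, x, mul_sub]
  refine sum_mul_ne_of_forall_fin (p := (· ∈ A ∪ {1})) (q := fun t => 1 - mf₂ < t ∧ t ≤ 1)
    hAM bb x ?_ ?_ ⟨.inr ⟨0, hn⟩, by simpa [x]⟩ hsum
  · rintro (p | q)
    exacts [.inl (hb p.1), .inr rfl]
  · rintro (p | q) <;> simp only [x, Sum.elim_inl, Sum.elim_inr, Pi.one_apply] <;>
      constructor <;> linarith

/-- Arithmetic core of Lemma 2.3: with `mf₂` chosen by the Alexeev–Mori DCC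
lemma for the set `A ∪ {1}` and target value `2`, the equation
`∑ nᵢ bᵢ + n (1 - a) = 2` with `bᵢ ∈ A`, `bᵢ ≤ 1 - ε`, `nᵢ, n` positive
integers, and `0 < a < ε ≤ mf₂`, has no solutions. -/
theorem no_solution_fiber_equation
    (ε mf₂ : ℝ) (hε0 : 0 < ε) (hε1 : ε < 1) (hεmf : ε ≤ mf₂) (hmf : 0 < mf₂)
    (A : Set ℝ) (hA : A ⊆ Set.Icc 0 1) (hDCC : DCC A)
    (hAM : ∀ (l : ℕ) (bb x : Fin l → ℝ),
      (∀ j, bb j ∈ A ∪ {1}) → (∀ j, 1 - mf₂ < x j ∧ x j ≤ 1) →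
      (∃ j, x j < 1) → (∑ j, x j * bb j) ≠ 2)
    (k : ℕ) (b : Fin k → ℝ) (hb : ∀ i, b i ∈ A) (hb' : ∀ i, 0 ≤ b i ∧ b i ≤ 1 - ε)
    (m : Fin k → ℕ) (hm : ∀ i, 0 < m i) (n : ℕ) (hn : 0 < n)
    (a : ℝ) (ha0 : 0 < a) (haε : a < ε)
    (heq : (∑ i, (m i : ℝ) * b i) + (n : ℝ) * (1 - a) = 2) :
    False :=
  no_solution_fiber_equation_general ε mf₂ hεmf A hAM k b hb m n hn a ha0 haε heq
end
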